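/- Trace inequality for conormal spaces: for a multi-index I with |I| = k, |Z^I f(t)|²_{L²(∂Ω)} ≲ ‖∇f(t)‖_{H^k_co} ‖f(t)‖_{H^k_co} + ‖f(t)‖²_{H^k_co}. -/

import Mathlib

open MeasureTheory
open scoped ENNReal ContDiff

noncomputable section

/-- ℝ³ modelled as `Fin 3 → ℝ`. -/
abbrev E : Type := Fin 3 → ℝ

/-- The half space, the standard local model of a smooth (bounded or exterior) domain. -/
def HS : Set E := {x | 0 < x 2}

/-- Parametrization of the boundary `{z = 0}` of the half space by `ℝ²`. -/
def emb (y : Fin 2 → ℝ) : E := ![y 0, y 1, 0]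

/-- `i`-th partial derivative. -/
def pdv (i : Fin 3) (g : E → ℝ) : E → ℝ := fun x => fderiv ℝ g x (Pi.single i 1)

/-- The conormal vector fields tangent to the boundary:
`Z₁ = ∂_{y¹}`, `Z₂ = ∂_{y²}`, `Z₃ = (z/(1+z)) ∂_z`. -/
def Zc (i : Fin 3) (g : E → ℝ) : E → ℝ :=
  fun x => if i = 2 then x 2 / (1 + x 2) * pdv 2 g x else pdv i g x

/-- Iterated conormal derivative `Z^I`. -/
def ZIter : List (Fin 3) → (E → ℝ) → E → ℝ
  | [], g => g
  | i :: L, g => Zc i (ZIter L g)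

/-- Conormal Sobolev norm `‖g‖_{H^k_co} = Σ_{|I| ≤ k} ‖Z^I g‖_{L²(Ω)}`. -/
def HcoN (k : ℕ) (g : E → ℝ) : ℝ≥0∞ :=
  ∑ l ∈ Finset.range (k + 1), ∑ J : Fin l → Fin 3,
    eLpNorm (ZIter (List.ofFn J) g) 2 (volume.restrict HS)

/-- Conormal Sobolev norm of the full gradient, `‖∇g‖_{H^k_co}`. -/
def GradHcoN (k : ℕ) (g : E → ℝ) : ℝ≥0∞ := ∑ i : Fin 3, HcoN k (pdv i g)

/-!
On a vertical line, if `∫₀^∞ (g² + 2|g ∂_z g|) dz` is finite then `g²` and `∂_z(g²)` are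
integrable, so `g² → 0` and `|g(y,0)|² = -∫₀^∞ ∂_z(g²) dz` is bounded by that integral.
Integrating in `y` and using Cauchy–Schwarz, `|g|²_{L²(∂Ω)} ≤ ‖g‖² + 2‖g‖ ‖∂_z g‖` with `L²`
norms on the half space.
For `g = Z^I f`, `‖g‖ ≤ ‖f‖_{H^k_co}`. To bound `∂_z Z^I f`, commute `∂_z` to the right:
it commutes with `Z₁, Z₂`, and `[∂_z, w ∂_z] = w' ∂_z` for `w(z) = z/(1+z)`. Since `w' = (1-w)²`,
polynomials in `w` are stable under `∂_z`, so `∂_z Z^I f = ∑ₘ Pₘ(w) Z^{Jₘ} ∂_z f` with `|Jₘ| ≤ k`.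
The coefficients are bounded on `z ≥ 0`, hence `‖∂_z Z^I f‖ ≲ ‖∂_z f‖_{H^k_co} ≤ ‖∇f‖_{H^k_co}`.
-/

open Set Filter Topology Polynomial

def conormalWeight (z : ℝ) : ℝ := z / (1 + z)

lemma conormalWeight_mem_Icc {z : ℝ} (hz : 0 ≤ z) : conormalWeight z ∈ Icc 0 1 :=
  ⟨by unfold conormalWeight; positivity, div_le_one_of_le₀ (by linarith) (by linarith)⟩

lemma hasDerivAt_conormalWeight {z : ℝ} (hz : 1 + z ≠ 0) :
    HasDerivAt conormalWeight ((1 - conormalWeight z) ^ 2) z :=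
  ((hasDerivAt_id' z).div ((hasDerivAt_id' z).const_add 1) hz).congr_deriv (by
    simp only [conormalWeight]; field_simp; ring)

lemma contDiffAt_conormalWeight {z : ℝ} (hz : 1 + z ≠ 0) : ContDiffAt ℝ ∞ conormalWeight z :=
  contDiffAt_id.div (contDiffAt_const.add contDiffAt_id) hz

lemma hasDerivAt_eval_conormalWeight (P : ℝ[X]) {z : ℝ} (hz : 1 + z ≠ 0) :
    HasDerivAt (fun z => P.eval (conormalWeight z))
      ((derivative P * (1 - X) ^ 2).eval (conormalWeight z)) z :=
  ((P.hasDerivAt _).comp z (hasDerivAt_conormalWeight hz)).congr_deriv (by simp)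

lemma contDiffAt_eval_conormalWeight (P : ℝ[X]) {x : E} (hx : 1 + x 2 ≠ 0) :
    ContDiffAt ℝ ∞ (fun x : E => P.eval (conormalWeight (x 2))) x :=
  (by simpa only [coe_aeval_eq_eval] using (P.contDiff_aeval (𝕜 := ℝ) ∞).contDiffAt :
    ContDiffAt ℝ ∞ (fun z => P.eval z) _).comp x <|
    (contDiffAt_conormalWeight hx).comp x (contDiff_apply ℝ ℝ 2).contDiffAt

lemma exists_norm_eval_conormalWeight_le (P : ℝ[X]) :
    ∃ C, ∀ z, 0 ≤ z → ‖P.eval (conormalWeight z)‖ ≤ C := by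
  obtain ⟨C, hC⟩ :=
    isCompact_Icc.exists_bound_of_continuousOn (P.continuous.continuousOn (s := Icc 0 1))
  exact ⟨C, fun z hz => hC _ (conormalWeight_mem_Icc hz)⟩

lemma Zc_two_apply (g : E → ℝ) (x : E) : Zc 2 g x = conormalWeight (x 2) * pdv 2 g x := rfl

lemma Zc_of_ne {i : Fin 3} (hi : i ≠ 2) (g : E → ℝ) : Zc i g = pdv i g :=
  funext fun _ => if_neg hi

@[fun_prop]
lemma measurable_pdv (i : Fin 3) (g : E → ℝ) : Measurable (pdv i g) :=
  measurable_fderiv_apply_const ℝ g _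

lemma measurable_Zc (i : Fin 3) (g : E → ℝ) : Measurable (Zc i g) := by
  by_cases hi : i = 2
  · subst hi
    exact ((measurable_pi_apply 2).div (measurable_const.add (measurable_pi_apply 2))).mul
      (measurable_pdv 2 g)
  · rw [Zc_of_ne hi]
    exact measurable_pdv i g

lemma measurable_ZIter {g : E → ℝ} (hg : Measurable g) : ∀ L, Measurable (ZIter L g)
  | [] => hg
  | i :: L => measurable_Zc i (ZIter L g)

lemma pdv_congr (i : Fin 3) {u v : E → ℝ} {x : E} (h : u =ᶠ[𝓝 x] v) :
    pdv i u x = pdv i v x := by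
  rw [pdv, pdv, h.fderiv_eq]

lemma pdv_add (i : Fin 3) {u v : E → ℝ} {x : E} (hu : DifferentiableAt ℝ u x)
    (hv : DifferentiableAt ℝ v x) : pdv i (fun x => u x + v x) x = pdv i u x + pdv i v x := by
  simp [pdv, fderiv_fun_add hu hv]

lemma pdv_mul (i : Fin 3) {u v : E → ℝ} {x : E} (hu : DifferentiableAt ℝ u x)
    (hv : DifferentiableAt ℝ v x) :
    pdv i (fun x => u x * v x) x = pdv i u x * v x + u x * pdv i v x := by
  simp only [pdv, fderiv_fun_mul hu hv, add_apply, smul_apply, smul_eq_mul]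
  ring

lemma pdv_comp_apply_two {φ : ℝ → ℝ} {φ' : ℝ} (i : Fin 3) {x : E}
    (hφ : HasDerivAt φ φ' (x 2)) : pdv i (fun x => φ (x 2)) x = (Pi.single i 1 : E) 2 * φ' := by
  have : HasFDerivAt (fun x : E => φ (x 2))
      (φ' • ContinuousLinearMap.proj (R := ℝ) (φ := fun _ : Fin 3 => ℝ) 2) x :=
    hφ.comp_hasFDerivAt (f := fun x : Fin 3 → ℝ => x 2) x (hasFDerivAt_apply 2 x)
  simp [pdv, this.fderiv, mul_comm]

lemma pdv_eval_conormalWeight_mul (P : ℝ[X]) (i : Fin 3) {v : E → ℝ} {x : E}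
    (hx : 1 + x 2 ≠ 0) (hv : DifferentiableAt ℝ v x) :
    pdv i (fun x => P.eval (conormalWeight (x 2)) * v x) x =
      (Pi.single i 1 : E) 2 * (derivative P * (1 - X) ^ 2).eval (conormalWeight (x 2)) * v x +
        P.eval (conormalWeight (x 2)) * pdv i v x := by
  rw [pdv_mul i ((contDiffAt_eval_conormalWeight P hx).differentiableAt (by simp)) hv,
    pdv_comp_apply_two i (hasDerivAt_eval_conormalWeight P hx)]

lemma pdv_comm {g : E → ℝ} {x : E} (hg : ContDiffAt ℝ 2 g x) (i j : Fin 3) :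
    pdv i (pdv j g) x = pdv j (pdv i g) x := by
  have hdiff : DifferentiableAt ℝ (fderiv ℝ g) x :=
    (hg.fderiv_right (m := 1) le_rfl).differentiableAt one_ne_zero
  have hsymm : IsSymmSndFDerivAt ℝ g x :=
    hg.isSymmSndFDerivAt (by simp [minSmoothness_of_isRCLikeNormedField])
  have key (v w : E) : fderiv ℝ (fun y => fderiv ℝ g y v) x w = fderiv ℝ (fderiv ℝ g) x w v := by
    simp [fderiv_clm_apply hdiff (differentiableAt_const v)]
  unfold pdv
  rw [key, key, hsymm]

lemma contDiffOn_pdv {U : Set E} (hU : IsOpen U) {g : E → ℝ} (hg : ContDiffOn ℝ ∞ g U)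
    (i : Fin 3) : ContDiffOn ℝ ∞ (pdv i g) U :=
  (hg.fderiv_of_isOpen hU (by simp)).clm_apply contDiffOn_const

lemma contDiffOn_Zc {U : Set E} (hU : IsOpen U) (hw : ∀ x ∈ U, 1 + x 2 ≠ 0) {g : E → ℝ}
    (hg : ContDiffOn ℝ ∞ g U) (i : Fin 3) : ContDiffOn ℝ ∞ (Zc i g) U := by
  by_cases hi : i = 2
  · subst hi
    refine ContDiffOn.mul (fun x hx => ?_) (contDiffOn_pdv hU hg 2)
    exact ((contDiffAt_conormalWeight (hw x hx)).comp x
      (contDiff_apply ℝ ℝ 2).contDiffAt).contDiffWithinAt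
  · rw [Zc_of_ne hi]
    exact contDiffOn_pdv hU hg i

lemma contDiffOn_ZIter {U : Set E} (hU : IsOpen U) (hw : ∀ x ∈ U, 1 + x 2 ≠ 0) {g : E → ℝ}
    (hg : ContDiffOn ℝ ∞ g U) : ∀ L, ContDiffOn ℝ ∞ (ZIter L g) U
  | [] => hg
  | i :: L => contDiffOn_Zc hU hw (contDiffOn_ZIter hU hw hg L) i

lemma Zc_congr (i : Fin 3) {u v : E → ℝ} {x : E} (h : u =ᶠ[𝓝 x] v) : Zc i u x = Zc i v x := by
  simp only [Zc, pdv_congr _ h]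

lemma Zc_add (i : Fin 3) {u v : E → ℝ} {x : E} (hu : DifferentiableAt ℝ u x)
    (hv : DifferentiableAt ℝ v x) : Zc i (fun x => u x + v x) x = Zc i u x + Zc i v x := by
  simp only [Zc, pdv_add _ hu hv]
  split_ifs <;> ring

lemma Zc_eval_conormalWeight_mul (P : ℝ[X]) (i : Fin 3) {v : E → ℝ} {x : E}
    (hx : 1 + x 2 ≠ 0) (hv : DifferentiableAt ℝ v x) :
    Zc i (fun x => P.eval (conormalWeight (x 2)) * v x) x =
      (if i = 2 then (X * derivative P * (1 - X) ^ 2).eval (conormalWeight (x 2)) * v x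
        else 0) + P.eval (conormalWeight (x 2)) * Zc i v x := by
  by_cases hi : i = 2
  · subst hi
    simp only [Zc_two_apply, pdv_eval_conormalWeight_mul P 2 hx hv, if_true, eval_mul, eval_X,
      Pi.single_eq_same, eval_pow, eval_sub, eval_one, one_mul]
    ring
  · simp only [Zc_of_ne hi, pdv_eval_conormalWeight_mul P i hx hv, if_neg hi,
      Pi.single_eq_of_ne' hi]
    ring

lemma isOpen_HS : IsOpen HS := isOpen_lt continuous_const (continuous_apply 2)

lemma measurableSet_HS : MeasurableSet HS := isOpen_HS.measurableSet

lemma one_add_ne_zero_of_mem_HS {x : E} (hx : x ∈ HS) : 1 + x 2 ≠ 0 := by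
  have : 0 < x 2 := hx
  positivity

lemma contDiffOn_ZIter_pdv_two {f : E → ℝ} (hf : ContDiff ℝ ∞ f) (J : List (Fin 3)) :
    ContDiffOn ℝ ∞ (ZIter J (pdv 2 f)) HS :=
  contDiffOn_ZIter isOpen_HS (fun _ => one_add_ne_zero_of_mem_HS)
    (contDiffOn_pdv isOpen_univ hf.contDiffOn 2 |>.mono (subset_univ _)) J

lemma differentiableAt_ZIter {f : E → ℝ} (hf : ContDiff ℝ ∞ f) (L : List (Fin 3)) {x : E}
    (hx : 0 ≤ x 2) : DifferentiableAt ℝ (ZIter L f) x := by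
  have hU : IsOpen {x : E | 1 + x 2 ≠ 0} := isOpen_ne_fun (by fun_prop) continuous_const
  exact ((contDiffOn_ZIter hU (fun _ hx => hx) hf.contDiffOn L).contDiffAt
    (hU.mem_nhds (by linarith : (0 : ℝ) < 1 + x 2).ne')).differentiableAt (by simp)

lemma eLpNorm_ZIter_le_HcoN {k : ℕ} (g : E → ℝ) {J : List (Fin 3)} (hJ : J.length ≤ k) :
    eLpNorm (ZIter J g) 2 (volume.restrict HS) ≤ HcoN k g := by
  have h := Finset.single_le_sum (fun _ _ => zero_le)
    (Finset.mem_univ J.get) (f := fun J' => eLpNorm (ZIter (List.ofFn J') g) 2 (volume.restrict HS))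
  rw [List.ofFn_get] at h
  exact h.trans <| Finset.single_le_sum (fun _ _ => zero_le)
    (Finset.mem_range.mpr (Nat.lt_succ_of_le hJ))
    (f := fun l => ∑ J' : Fin l → Fin 3, eLpNorm (ZIter (List.ofFn J') g) 2 (volume.restrict HS))

lemma HcoN_pdv_le_GradHcoN (k : ℕ) (f : E → ℝ) (i : Fin 3) : HcoN k (pdv i f) ≤ GradHcoN k f :=
  Finset.single_le_sum (f := fun i => HcoN k (pdv i f)) (fun _ _ => zero_le) (Finset.mem_univ i)

/-- Operators acting, on the half space, as `f ↦ ∑ₘ Pₘ(w(z)) Z^{Jₘ} ∂_z f` with `Pₘ` polynomials,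
`w(z) = z/(1+z)` and `|Jₘ| ≤ k`. -/
inductive ConormalComb (k : ℕ) : ((E → ℝ) → E → ℝ) → Prop
  | term (P : ℝ[X]) (J : List (Fin 3)) (hJ : J.length ≤ k) :
      ConormalComb k fun f x => P.eval (conormalWeight (x 2)) * ZIter J (pdv 2 f) x
  | add {T₁ T₂ : (E → ℝ) → E → ℝ} :
      ConormalComb k T₁ → ConormalComb k T₂ → ConormalComb k fun f x => T₁ f x + T₂ f x
  | congr {T T' : (E → ℝ) → E → ℝ} :
      ConormalComb k T → (∀ f, ContDiff ℝ ∞ f → EqOn (T f) (T' f) HS) → ConormalComb k T'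

namespace ConormalComb

variable {k : ℕ} {T : (E → ℝ) → E → ℝ}

lemma mono {l : ℕ} (hkl : k ≤ l) (hT : ConormalComb k T) : ConormalComb l T := by
  induction hT with
  | term P J hJ => exact term P J (hJ.trans hkl)
  | add _ _ ih₁ ih₂ => exact add ih₁ ih₂
  | congr _ h ih => exact congr ih h

lemma contDiffOn (hT : ConormalComb k T) {f : E → ℝ} (hf : ContDiff ℝ ∞ f) :
    ContDiffOn ℝ ∞ (T f) HS := by
  induction hT with
  | term P J _ =>
    exact ContDiffOn.mul (fun x hx => (contDiffAt_eval_conormalWeight P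
      (one_add_ne_zero_of_mem_HS hx)).contDiffWithinAt) (contDiffOn_ZIter_pdv_two hf J)
  | add _ _ ih₁ ih₂ => exact ih₁.add ih₂
  | congr _ h ih => exact ih.congr (h f hf).symm

lemma differentiableAt (hT : ConormalComb k T) {f : E → ℝ} (hf : ContDiff ℝ ∞ f) {x : E}
    (hx : x ∈ HS) : DifferentiableAt ℝ (T f) x :=
  ((hT.contDiffOn hf).contDiffAt (isOpen_HS.mem_nhds hx)).differentiableAt (by simp)

lemma eval_conormalWeight_mul (P : ℝ[X]) (hT : ConormalComb k T) :
    ConormalComb k fun f x => P.eval (conormalWeight (x 2)) * T f x := by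
  induction hT with
  | term Q J hJ =>
    refine congr (term (P * Q) J hJ) fun f _ x _ => ?_
    simp only [eval_mul, mul_assoc]
  | add _ _ ih₁ ih₂ =>
    refine congr (add ih₁ ih₂) fun f _ x _ => ?_
    simp only [mul_add]
  | congr _ h ih => exact congr ih fun f hf x hx => by simp only [h f hf hx]

lemma Zc_comp (i : Fin 3) (hT : ConormalComb k T) : ConormalComb (k + 1) fun f => Zc i (T f) := by
  induction hT with
  | term P J hJ =>
    have hZ : ConormalComb (k + 1) fun f x =>
        (if i = 2 then (X * derivative P * (1 - X) ^ 2).eval (conormalWeight (x 2)) *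
          ZIter J (pdv 2 f) x else 0) +
        P.eval (conormalWeight (x 2)) * ZIter (i :: J) (pdv 2 f) x := by
      have hiJ : (i :: J).length ≤ k + 1 := by simpa using hJ
      by_cases hi : i = 2
      · simpa only [hi, if_true] using add (term _ J (hJ.trans k.le_succ)) (term P (i :: J) hiJ)
      · simpa only [hi, if_false, zero_add] using term P (i :: J) hiJ
    refine congr hZ fun f hf x hx => ?_
    rw [Zc_eval_conormalWeight_mul P i (one_add_ne_zero_of_mem_HS hx)
      (((contDiffOn_ZIter_pdv_two hf J).contDiffAt (isOpen_HS.mem_nhds hx)).differentiableAt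
        (by simp))]
    rfl
  | add hT₁ hT₂ ih₁ ih₂ =>
    refine congr (add ih₁ ih₂) fun f hf x hx => ?_
    exact (Zc_add i (hT₁.differentiableAt hf hx) (hT₂.differentiableAt hf hx)).symm
  | congr _ h ih =>
    exact congr ih fun f hf x hx =>
      Zc_congr i ((h f hf).eventuallyEq_of_mem (isOpen_HS.mem_nhds hx))

lemma exists_eLpNorm_le (hT : ConormalComb k T) : ∃ B : ℝ≥0∞, B < ⊤ ∧ ∀ f, ContDiff ℝ ∞ f →
    eLpNorm (T f) 2 (volume.restrict HS) ≤ B * HcoN k (pdv 2 f) := by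
  induction hT with
  | term P J hJ =>
    obtain ⟨C, hC⟩ := exists_norm_eval_conormalWeight_le P
    refine ⟨ENNReal.ofReal C, ENNReal.ofReal_lt_top, fun f _ => ?_⟩
    have hpt : ∀ᵐ x ∂volume.restrict HS, ‖P.eval (conormalWeight (x 2)) * ZIter J (pdv 2 f) x‖ ≤
        C * ‖ZIter J (pdv 2 f) x‖ := by
      refine (ae_restrict_iff' measurableSet_HS).2 (Eventually.of_forall fun x (hx : 0 < x 2) => ?_)
      rw [norm_mul]
      exact mul_le_mul_of_nonneg_right (hC _ hx.le) (norm_nonneg _)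
    refine (eLpNorm_le_mul_eLpNorm_of_ae_le_mul hpt 2).trans ?_
    gcongr
    exact eLpNorm_ZIter_le_HcoN _ hJ
  | @add T₁ T₂ hT₁ hT₂ ih₁ ih₂ =>
    obtain ⟨B₁, hB₁, h₁⟩ := ih₁
    obtain ⟨B₂, hB₂, h₂⟩ := ih₂
    refine ⟨B₁ + B₂, ENNReal.add_lt_top.2 ⟨hB₁, hB₂⟩, fun f hf => ?_⟩
    calc eLpNorm (fun x => T₁ f x + T₂ f x) 2 (volume.restrict HS)
        ≤ eLpNorm (T₁ f) 2 (volume.restrict HS) + eLpNorm (T₂ f) 2 (volume.restrict HS) :=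
          eLpNorm_add_le
            ((hT₁.contDiffOn hf).continuousOn.aestronglyMeasurable measurableSet_HS)
            ((hT₂.contDiffOn hf).continuousOn.aestronglyMeasurable measurableSet_HS) (by norm_num)
      _ ≤ (B₁ + B₂) * HcoN k (pdv 2 f) := by
          rw [add_mul]
          exact add_le_add (h₁ f hf) (h₂ f hf)
  | congr _ h ih =>
    obtain ⟨B, hB, hle⟩ := ih
    refine ⟨B, hB, fun f hf => ?_⟩
    rw [← eLpNorm_congr_ae ((ae_restrict_iff' measurableSet_HS).2 (Eventually.of_forall (h f hf)))]
    exact hle f hf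

end ConormalComb

theorem conormalComb_pdv_two_ZIter :
    ∀ L : List (Fin 3), ConormalComb L.length fun f => pdv 2 (ZIter L f)
  | [] => .congr (.term 1 [] le_rfl) fun f _ x _ => by simp [ZIter]
  | i :: L => by
    have ih := conormalComb_pdv_two_ZIter L
    have hG {f : E → ℝ} (hf : ContDiff ℝ ∞ f) : ContDiffOn ℝ ∞ (ZIter L f) HS :=
      contDiffOn_ZIter isOpen_HS (fun _ => one_add_ne_zero_of_mem_HS) hf.contDiffOn L
    by_cases hi : i = 2
    · subst hi
      -- `[∂_z, w ∂_z] = w' ∂_z` with `w' = (1 - w)²`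
      refine .congr (.add ((ih.eval_conormalWeight_mul ((1 - X) ^ 2)).mono L.length.le_succ)
        (ih.Zc_comp 2)) fun f hf x hx => ?_
      have hZ : Zc 2 (ZIter L f) = fun x => X.eval (conormalWeight (x 2)) * pdv 2 (ZIter L f) x :=
        funext fun x => by rw [eval_X, Zc_two_apply]
      have hdiff : DifferentiableAt ℝ (pdv 2 (ZIter L f)) x :=
        ((contDiffOn_pdv isOpen_HS (hG hf) 2).contDiffAt (isOpen_HS.mem_nhds hx)).differentiableAt
          (by simp)
      change _ = pdv 2 (Zc 2 (ZIter L f)) x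
      rw [hZ, pdv_eval_conormalWeight_mul X 2 (one_add_ne_zero_of_mem_HS hx) hdiff]
      simp [Zc_two_apply]
    · refine .congr (ih.Zc_comp i) fun f hf x hx => ?_
      change Zc i (pdv 2 (ZIter L f)) x = pdv 2 (Zc i (ZIter L f)) x
      rw [Zc_of_ne hi, Zc_of_ne hi,
        pdv_comm (((hG hf).contDiffAt (isOpen_HS.mem_nhds hx)).of_le (by norm_cast))]

lemma eLpNorm_two_sq_eq_lintegral {α : Type*} [MeasurableSpace α] (μ : Measure α) (f : α → ℝ) :
    eLpNorm f 2 μ ^ 2 = ∫⁻ x, ‖f x‖ₑ ^ 2 ∂μ := by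
  simpa [ENNReal.rpow_two] using
    eLpNorm_nnreal_pow_eq_lintegral (f := f) (μ := μ) (p := 2) two_ne_zero

lemma enorm_sq_le_lintegral_Ioi {h h' : ℝ → ℝ} {a : ℝ} (hcont : ContinuousWithinAt h (Ici a) a)
    (hderiv : ∀ z ∈ Ioi a, HasDerivAt h (h' z) z) :
    ‖h a‖ₑ ^ 2 ≤ ∫⁻ z in Ioi a, ‖h z‖ₑ ^ 2 + 2 * (‖h z‖ₑ * ‖h' z‖ₑ) := by
  set R := ∫⁻ z in Ioi a, ‖h z‖ₑ ^ 2 + 2 * (‖h z‖ₑ * ‖h' z‖ₑ)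
  by_cases hR : R = ⊤
  · simp [hR]
  have hR_lt : R < ⊤ := lt_top_iff_ne_top.2 hR
  have hprod_eq (z : ℝ) : ‖2 * h z * h' z‖ₑ = 2 * (‖h z‖ₑ * ‖h' z‖ₑ) := by
    simp [enorm_mul, mul_assoc, Real.enorm_eq_ofReal]
  have hhm : AEStronglyMeasurable h (volume.restrict (Ioi a)) :=
    ContinuousOn.aestronglyMeasurable (fun z hz => (hderiv z hz).continuousAt.continuousWithinAt)
      measurableSet_Ioi
  have hh'm : AEStronglyMeasurable h' (volume.restrict (Ioi a)) :=
    (measurable_deriv h).aestronglyMeasurable.congr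
      ((ae_restrict_iff' measurableSet_Ioi).2 (.of_forall fun z hz => (hderiv z hz).deriv))
  have hsq : IntegrableOn (fun z => h z ^ 2) (Ioi a) :=
    ⟨hhm.pow 2, (lintegral_mono fun z => by rw [enorm_pow]; exact le_self_add).trans_lt hR_lt⟩
  have hprod : IntegrableOn (fun z => 2 * h z * h' z) (Ioi a) :=
    ⟨(hhm.const_mul 2).mul hh'm,
      (lintegral_mono fun z => (hprod_eq z).trans_le le_add_self).trans_lt hR_lt⟩
  have hderiv_sq (z) (hz : z ∈ Ioi a) : HasDerivAt (fun z => h z ^ 2) (2 * h z * h' z) z :=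
    ((hderiv z hz).pow 2).congr_deriv (by norm_num)
  have hFTC := integral_Ioi_of_hasDerivAt_of_tendsto
    (hcont.pow 2 : ContinuousWithinAt (fun z => h z ^ 2) (Ici a) a) hderiv_sq hprod
    (tendsto_zero_of_hasDerivAt_of_integrableOn_Ioi hderiv_sq hprod hsq)
  calc ‖h a‖ₑ ^ 2 = ‖∫ z in Ioi a, 2 * h z * h' z‖ₑ := by
        rw [hFTC, zero_sub, enorm_neg, Pi.pow_apply, enorm_pow]
    _ ≤ ∫⁻ z in Ioi a, ‖2 * h z * h' z‖ₑ := enorm_integral_le_lintegral_enorm _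
    _ ≤ R := lintegral_mono fun z => (hprod_eq z).trans_le le_add_self

lemma piFinSuccAbove_two_symm_apply (y : Fin 2 → ℝ) (z : ℝ) :
    (MeasurableEquiv.piFinSuccAbove (fun _ : Fin 3 => ℝ) 2).symm (z, y) =
      emb y + z • (Pi.single 2 1 : E) := by
  funext j
  fin_cases j <;> simp [emb, MeasurableEquiv.piFinSuccAbove_symm_apply, Fin.insertNthEquiv,
    Fin.insertNth, Fin.succAboveCases]

lemma setLIntegral_HS_eq (Φ : E → ℝ≥0∞) (hΦ : Measurable Φ) :
    ∫⁻ x in HS, Φ x = ∫⁻ y : Fin 2 → ℝ, ∫⁻ z : ℝ in Ioi 0, Φ (emb y + z • Pi.single 2 1) := by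
  have he := (volume_preserving_piFinSuccAbove (fun _ : Fin 3 => ℝ) 2).symm
  have hΦHS := hΦ.indicator measurableSet_HS
  rw [← lintegral_indicator measurableSet_HS, ← he.lintegral_comp hΦHS, Measure.volume_eq_prod,
    lintegral_prod_symm' (fun p => HS.indicator Φ ((MeasurableEquiv.piFinSuccAbove _ 2).symm p))
      (hΦHS.comp (MeasurableEquiv.measurable _))]
  refine lintegral_congr fun y => ?_
  rw [← lintegral_indicator measurableSet_Ioi]
  refine lintegral_congr fun z => ?_
  have hz : (emb y + z • Pi.single 2 1 : E) 2 = z := by simp [emb]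
  simp only [piFinSuccAbove_two_symm_apply, indicator, HS, mem_ofPred_eq, mem_Ioi, hz]

theorem eLpNorm_trace_sq_le {g : E → ℝ} (hgm : Measurable g)
    (hg : ∀ x : E, 0 ≤ x 2 → DifferentiableAt ℝ g x) :
    eLpNorm (fun y => g (emb y)) 2 volume ^ 2 ≤
      eLpNorm g 2 (volume.restrict HS) ^ 2 +
        2 * (eLpNorm g 2 (volume.restrict HS) * eLpNorm (pdv 2 g) 2 (volume.restrict HS)) := by
  set Φ : E → ℝ≥0∞ := fun x => ‖g x‖ₑ ^ 2 + 2 * (‖g x‖ₑ * ‖pdv 2 g x‖ₑ)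
  have hslice (y : Fin 2 → ℝ) (z : ℝ) (hz : 0 ≤ z) :
      HasDerivAt (fun t => g (emb y + t • Pi.single 2 1)) (pdv 2 g (emb y + z • Pi.single 2 1)) z :=
    (hg _ (by simpa [emb] using hz)).hasFDerivAt.comp_hasDerivAt z
      (((hasDerivAt_id z).smul_const _).const_add _ |>.congr_deriv (by simp))
  have htrace (y : Fin 2 → ℝ) :
      ‖g (emb y)‖ₑ ^ 2 ≤ ∫⁻ z : ℝ in Ioi 0, Φ (emb y + z • Pi.single 2 1) := by
    simpa only [zero_smul, add_zero] using enorm_sq_le_lintegral_Ioi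
      (hslice y 0 le_rfl).continuousAt.continuousWithinAt fun z hz => hslice y z (le_of_lt hz)
  have hHolder : ∫⁻ x in HS, ‖g x‖ₑ * ‖pdv 2 g x‖ₑ ≤
      eLpNorm g 2 (volume.restrict HS) * eLpNorm (pdv 2 g) 2 (volume.restrict HS) := by
    simpa [eLpNorm_one_eq_lintegral_enorm, enorm_mul] using
      eLpNorm_le_eLpNorm_mul_eLpNorm'_of_norm (p := 2) (q := 2) (r := 1)
        hgm.aestronglyMeasurable (measurable_pdv 2 g).aestronglyMeasurable (· * ·) 1
        (Eventually.of_forall fun x => by simp)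
  rw [eLpNorm_two_sq_eq_lintegral, eLpNorm_two_sq_eq_lintegral]
  calc ∫⁻ y, ‖g (emb y)‖ₑ ^ 2
      ≤ ∫⁻ y, ∫⁻ z : ℝ in Ioi 0, Φ (emb y + z • Pi.single 2 1) := lintegral_mono htrace
    _ = ∫⁻ x in HS, Φ x := (setLIntegral_HS_eq Φ (by fun_prop)).symm
    _ = (∫⁻ x in HS, ‖g x‖ₑ ^ 2) + 2 * ∫⁻ x in HS, ‖g x‖ₑ * ‖pdv 2 g x‖ₑ := by
        rw [← lintegral_const_mul _ (by fun_prop), ← lintegral_add_left (by fun_prop)]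
    _ ≤ _ := by gcongr

theorem exists_eLpNorm_pdv_two_ZIter_le (k : ℕ) : ∃ B : ℝ≥0∞, B < ⊤ ∧
    ∀ f, ContDiff ℝ ∞ f → ∀ I : Fin k → Fin 3,
      eLpNorm (pdv 2 (ZIter (List.ofFn I) f)) 2 (volume.restrict HS) ≤ B * GradHcoN k f := by
  have hcomm (I : Fin k → Fin 3) := (conormalComb_pdv_two_ZIter (List.ofFn I)).exists_eLpNorm_le
  simp only [List.length_ofFn] at hcomm
  choose B hB_lt hB using hcomm
  refine ⟨∑ I, B I, ENNReal.sum_lt_top.2 fun I _ => hB_lt I, fun f hf I => ?_⟩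
  exact (hB I f hf).trans (mul_le_mul' (Finset.single_le_sum (fun _ _ => zero_le)
    (Finset.mem_univ I)) (HcoN_pdv_le_GradHcoN k f 2))

/-- Trace inequality for conormal spaces: for `|I| = k`,
`|Z^I f|²_{L²(∂Ω)} ≲ ‖∇f‖_{H^k_co} ‖f‖_{H^k_co} + ‖f‖²_{H^k_co}`. -/
theorem conormal_trace_inequality (k : ℕ) :
    ∃ C : ℝ≥0∞, 0 < C ∧ C < ⊤ ∧
      ∀ f : E → ℝ, ContDiff ℝ ∞ f → ∀ I : Fin k → Fin 3,
        (eLpNorm (fun y : Fin 2 → ℝ => ZIter (List.ofFn I) f (emb y)) 2 volume) ^ 2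
          ≤ C * (GradHcoN k f * HcoN k f + (HcoN k f) ^ 2) := by
  obtain ⟨B, hB_lt, hB⟩ := exists_eLpNorm_pdv_two_ZIter_le k
  refine ⟨1 + 2 * B, lt_of_lt_of_le one_pos le_self_add, by finiteness, fun f hf I => ?_⟩
  set g := ZIter (List.ofFn I) f
  set H := HcoN k f
  set G := GradHcoN k f
  have hg_le : eLpNorm g 2 (volume.restrict HS) ≤ H := eLpNorm_ZIter_le_HcoN f (by simp)
  calc eLpNorm (fun y => g (emb y)) 2 volume ^ 2
      ≤ eLpNorm g 2 (volume.restrict HS) ^ 2 +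
          2 * (eLpNorm g 2 (volume.restrict HS) * eLpNorm (pdv 2 g) 2 (volume.restrict HS)) :=
        eLpNorm_trace_sq_le (measurable_ZIter hf.continuous.measurable _)
          fun _ hx => differentiableAt_ZIter hf _ hx
    _ ≤ H ^ 2 + 2 * (H * (B * G)) := by gcongr; exact hB f hf I
    _ ≤ H ^ 2 + 2 * (H * (B * G)) + (G * H + 2 * B * H ^ 2) := le_self_add
    _ = (1 + 2 * B) * (G * H + H ^ 2) := by ring
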